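/- arXiv:2202.06553 — 3 statements merged into one kernel-verified Lean document; each statement's English description precedes it below -/
import Mathlib

section
/- If φ is an analytic self-map of the unit disk and the composition operator C_φ f = f∘φ is an isometry of the harmonic Bloch norm |||·|||_{HB(1)} on the harmonic Bloch space, then φ(0) = 0. -/
/-!
An analytic self-map `φ` of the disk does not increase the harmonic Bloch seminorm: by the chain
rule and the Schwarz–Pick inequality `(1 - |z|²)|φ'(z)| ≤ 1 - |φ(z)|²`, the Bloch quantity of
`f ∘ φ` at `z` is at most that of `f` at `φ(z)`. Testing the isometry on `f(z) = z - φ(0)`, which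
vanishes at `φ(0)`, gives `|φ(0)| + ‖f‖ = |||f||| = |||f ∘ φ||| = ‖f ∘ φ‖ ≤ ‖f‖`, so `φ(0) = 0`.
-/

open Complex Metric Set Filter
noncomputable section

/-- The open unit disk in `ℂ`. -/
def unitDisk : Set ℂ := Metric.ball (0 : ℂ) 1

/-- The set of values `(1-|z|²)^α (|f_z(z)| + |f_z̄(z)|)` for `z` in the unit disk, where the
harmonic function is `f = h + conj g` with `h, g` analytic, so `f_z = h'` and `f_z̄ = conj g'`. -/
def hbSet (α : ℝ) (h g : ℂ → ℂ) : Set ℝ :=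
  (fun z => (1 - ‖z‖ ^ 2) ^ α *
    (‖deriv h z‖ + ‖deriv g z‖)) '' unitDisk

/-- The harmonic α-Bloch seminorm `‖f‖_{HB(α)}` of `f = h + conj g`. -/
def hbSemi (α : ℝ) (h g : ℂ → ℂ) : ℝ := sSup (hbSet α h g)

/-- The harmonic α-Bloch norm `|||f|||_{HB(α)} = |f(0)| + ‖f‖_{HB(α)}` of `f = h + conj g`. -/
def hbNorm (α : ℝ) (h g : ℂ → ℂ) : ℝ :=
  ‖h 0 + (starRingEnd ℂ) (g 0)‖ + hbSemi α h g

/-- An analytic self-map of the unit disk. -/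
def IsSelfMap (φ : ℂ → ℂ) : Prop :=
  DifferentiableOn ℂ φ unitDisk ∧ MapsTo φ unitDisk unitDisk

/-- `f = h + conj g` is a harmonic α-Bloch function: `h, g` analytic on the disk and the
Bloch quantity is bounded. -/
def IsHB (α : ℝ) (h g : ℂ → ℂ) : Prop :=
  DifferentiableOn ℂ h unitDisk ∧ DifferentiableOn ℂ g unitDisk ∧ BddAbove (hbSet α h g)

/-- The composition operator `C_φ` is an isometry on `HB(α)`: `|||f∘φ||| = |||f|||` for every
harmonic α-Bloch function `f = h + conj g` (note `f ∘ φ = h∘φ + conj (g∘φ)`). -/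
def IsIsometryOn (α : ℝ) (φ : ℂ → ℂ) : Prop :=
  ∀ h g : ℂ → ℂ, IsHB α h g → hbNorm α (h ∘ φ) (g ∘ φ) = hbNorm α h g

/-- `φ` is a rotation of the unit disk. -/
def IsRotation (φ : ℂ → ℂ) : Prop :=
  ∃ lam : ℂ, ‖lam‖ = 1 ∧ ∀ z ∈ unitDisk, φ z = lam * z

/-- `τ_φ(z) = (1-|z|²)|φ'(z)| / (1-|φ(z)|²)`. -/
def tauPhi (φ : ℂ → ℂ) (z : ℂ) : ℝ :=
  (1 - ‖z‖ ^ 2) * ‖deriv φ z‖ / (1 - ‖φ z‖ ^ 2)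

open ComplexConjugate

/-- `φ_a`, the disk automorphism swapping `a` and `0`. -/
def mobius (a z : ℂ) : ℂ := (a - z) / (1 - conj a * z)

lemma one_sub_conj_mul_ne_zero {a z : ℂ} (ha : ‖a‖ < 1) (hz : ‖z‖ < 1) :
    1 - conj a * z ≠ 0 := by
  refine sub_ne_zero.2 fun h => ?_
  have : ‖conj a * z‖ < 1 := by
    rw [norm_mul, Complex.norm_conj]
    nlinarith [norm_nonneg a, norm_nonneg z]
  simp [← h] at this

lemma normSq_one_sub_conj_mul (a z : ℂ) :
    normSq (1 - conj a * z) = (1 - normSq a) * (1 - normSq z) + normSq (a - z) := by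
  simp only [normSq_apply, sub_re, sub_im, mul_re, mul_im, one_re, one_im, conj_re, conj_im]
  ring

lemma mobius_mapsTo {a : ℂ} (ha : ‖a‖ < 1) : MapsTo (mobius a) (ball 0 1) (ball 0 1) := by
  intro z hz
  rw [mem_ball_zero_iff] at hz ⊢
  have hna : normSq a < 1 := by rw [← Complex.sq_norm]; nlinarith [norm_nonneg a]
  have hnz : normSq z < 1 := by rw [← Complex.sq_norm]; nlinarith [norm_nonneg z]
  have hden : 0 < normSq (1 - conj a * z) := normSq_pos.2 (one_sub_conj_mul_ne_zero ha hz)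
  rw [← sq_lt_one_iff₀ (norm_nonneg _), Complex.sq_norm, mobius, normSq_div, div_lt_one hden,
    normSq_one_sub_conj_mul]
  nlinarith [mul_pos (sub_pos.2 hna) (sub_pos.2 hnz)]

lemma hasDerivAt_mobius (a : ℂ) {z : ℂ} (hz : 1 - conj a * z ≠ 0) :
    HasDerivAt (mobius a) ((conj a * a - 1) / (1 - conj a * z) ^ 2) z := by
  have hnum : HasDerivAt (fun w => a - w) (-1) z := by
    simpa using (hasDerivAt_id z).const_sub a
  have hden : HasDerivAt (fun w => 1 - conj a * w) (-conj a) z := by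
    simpa using ((hasDerivAt_id z).const_mul (conj a)).const_sub 1
  exact (hnum.div hden hz).congr_deriv (by ring)

lemma differentiableOn_mobius {a : ℂ} (ha : ‖a‖ < 1) :
    DifferentiableOn ℂ (mobius a) (ball 0 1) :=
  fun _z hz => (hasDerivAt_mobius a (one_sub_conj_mul_ne_zero ha
    (mem_ball_zero_iff.1 hz))).differentiableAt.differentiableWithinAt

/-- The Schwarz–Pick lemma, from the Schwarz lemma applied to `φ_{ψ z} ∘ ψ ∘ φ_z`. -/
theorem schwarz_pick {ψ : ℂ → ℂ} (hd : DifferentiableOn ℂ ψ (ball 0 1))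
    (hm : MapsTo ψ (ball 0 1) (ball 0 1)) {z : ℂ} (hz : z ∈ ball (0 : ℂ) 1) :
    (1 - ‖z‖ ^ 2) * ‖deriv ψ z‖ ≤ 1 - ‖ψ z‖ ^ 2 := by
  set b := ψ z
  have hz1 : ‖z‖ < 1 := mem_ball_zero_iff.1 hz
  have hb1 : ‖b‖ < 1 := mem_ball_zero_iff.1 (hm hz)
  have hz0 : mobius z 0 = z := by simp [mobius]
  have hG0 : mobius b (ψ (mobius z 0)) = 0 := by simp [mobius, b]
  have hG : HasDerivAt (mobius b ∘ ψ ∘ mobius z)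
      ((conj b * b - 1) / (1 - conj b * b) ^ 2 * (deriv ψ z * (conj z * z - 1))) 0 := by
    have hmz : HasDerivAt (mobius z) (conj z * z - 1) 0 := by
      simpa using hasDerivAt_mobius z (z := 0) (by simp)
    have hψ : HasDerivAt ψ (deriv ψ z) (mobius z 0) := by
      rw [hz0]; exact (hd.differentiableAt (isOpen_ball.mem_nhds hz)).hasDerivAt
    have hmb : HasDerivAt (mobius b) ((conj b * b - 1) / (1 - conj b * b) ^ 2)
        (ψ (mobius z 0)) := by
      rw [hz0]; exact hasDerivAt_mobius b (one_sub_conj_mul_ne_zero hb1 hb1)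
    exact hmb.comp 0 (hψ.comp 0 hmz)
  have hschwarz := Complex.norm_deriv_le_one_of_mapsTo_ball
    ((differentiableOn_mobius hb1).comp (hd.comp (differentiableOn_mobius hz1) (mobius_mapsTo hz1))
      (hm.comp (mobius_mapsTo hz1)))
    (by rw [Function.comp_apply, Function.comp_apply, hG0]
        exact ((mobius_mapsTo hb1).comp (hm.comp (mobius_mapsTo hz1))).mono_right
          ball_subset_closedBall)
    one_pos
  have hb2 : ‖b‖ ^ 2 < 1 := by nlinarith [norm_nonneg b]
  have hz2 : ‖z‖ ^ 2 < 1 := by nlinarith [norm_nonneg z]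
  have hD : (conj b * b - 1) / (1 - conj b * b) ^ 2 * (deriv ψ z * (conj z * z - 1)) =
      (((1 - ‖z‖ ^ 2) / (1 - ‖b‖ ^ 2) : ℝ) : ℂ) * deriv ψ z := by
    have : (1 : ℂ) - (‖b‖ : ℂ) ^ 2 ≠ 0 := by exact_mod_cast (sub_pos.2 hb2).ne'
    rw [Complex.conj_mul', Complex.conj_mul']
    push_cast
    field_simp
    ring
  rwa [hG.deriv, hD, norm_mul, Complex.norm_real,
    Real.norm_of_nonneg (div_nonneg (sub_pos.2 hz2).le (sub_pos.2 hb2).le), div_mul_eq_mul_div,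
    div_le_one (sub_pos.2 hb2)] at hschwarz

lemma hbSet_nonempty (α : ℝ) (h g : ℂ → ℂ) : (hbSet α h g).Nonempty :=
  (nonempty_ball.2 one_pos).image _

theorem hbSemi_comp_le {φ h g : ℂ → ℂ} (hφ : IsSelfMap φ) (hf : IsHB 1 h g) :
    hbSemi 1 (h ∘ φ) (g ∘ φ) ≤ hbSemi 1 h g := by
  obtain ⟨hφd, hφm⟩ := hφ
  obtain ⟨hh, hg, hbdd⟩ := hf
  refine csSup_le (hbSet_nonempty _ _ _) ?_
  rintro _ ⟨z, hz, rfl⟩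
  have hφz := hφm hz
  have hdiff {k : ℂ → ℂ} (hk : DifferentiableOn ℂ k unitDisk) : deriv (k ∘ φ) z =
      deriv k (φ z) * deriv φ z :=
    deriv_comp z (hk.differentiableAt (isOpen_ball.mem_nhds hφz))
      (hφd.differentiableAt (isOpen_ball.mem_nhds hz))
  calc (1 - ‖z‖ ^ 2) ^ (1 : ℝ) * (‖deriv (h ∘ φ) z‖ + ‖deriv (g ∘ φ) z‖)
      = (1 - ‖z‖ ^ 2) * ‖deriv φ z‖ * (‖deriv h (φ z)‖ + ‖deriv g (φ z)‖) := by
        rw [Real.rpow_one, hdiff hh, hdiff hg, norm_mul, norm_mul]; ring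
    _ ≤ (1 - ‖φ z‖ ^ 2) ^ (1 : ℝ) * (‖deriv h (φ z)‖ + ‖deriv g (φ z)‖) := by
        rw [Real.rpow_one]
        gcongr
        exact schwarz_pick hφd hφm hz
    _ ≤ hbSemi 1 h g := le_csSup hbdd ⟨φ z, hφz, rfl⟩

lemma isHB_sub_const (a : ℂ) : IsHB 1 (fun z => z - a) 0 := by
  refine ⟨by fun_prop, differentiableOn_const 0, 1, ?_⟩
  rintro _ ⟨z, -, rfl⟩
  simp only [deriv_sub_const, deriv_id'', deriv_zero, Pi.zero_apply, norm_one, norm_zero,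
    add_zero, mul_one, Real.rpow_one]
  nlinarith [norm_nonneg z]

/-- if `C_φ` is an isometry of the harmonic Bloch norm `|||·|||_{HB(1)}`, then
`φ(0) = 0`. -/
theorem stmt2 (φ : ℂ → ℂ) (hφ : IsSelfMap φ) (hiso : IsIsometryOn 1 φ) : φ 0 = 0 := by
  have hf := isHB_sub_const (φ 0)
  have hnorm := hiso _ _ hf
  have hle := hbSemi_comp_le hφ hf
  simp only [hbNorm, Function.comp_apply, sub_self, Pi.zero_apply, map_zero, add_zero, norm_zero,
    zero_sub, norm_neg, zero_add] at hnorm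
  exact norm_le_zero_iff.1 (by linarith)
end
end

section
/- If φ is an analytic self-map of the unit disk D with φ(0) = 0, and C_φ is an isometry on the harmonic Bloch space HB(1), and φ' is bounded on D, then φ is a rotation, i.e., φ(z) = λz for some λ with |λ| = 1. -/
open Complex Metric Set Filter
noncomputable section

/-!
Testing the isometry on `f(z) = z` gives `|φ(0)| + sup (1 - |z|²)|φ'(z)| = 1`, so the supremum is
`1`. As `φ'` is bounded, `(1 - |z|²)|φ'(z)| ≤ 1/2` near the circle, hence the supremum is attained
at some `c`. Schwarz–Pick then forces `φ(c) = 0`, and the equality case of the Schwarz lemma makes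
`φ ∘ m_c` a rotation, where `m_c` is the disk automorphism sending `0` to `c`. This rotation
vanishes at `-c`, so `c = 0` and `φ` itself is the rotation.
-/

open ComplexConjugate

theorem exists_mem_ball_le_of_le_sSup {α : Type*} [PseudoMetricSpace α] [ProperSpace α]
    {β : α → ℝ} {x : α} {r R a b : ℝ} (hcont : ContinuousOn β (ball x R)) (hr : 0 ≤ r)
    (hrR : r < R) (hba : b < a) (hedge : ∀ z ∈ ball x R, r < dist z x → β z ≤ b)
    (ha : a ≤ sSup (β '' ball x R)) : ∃ c ∈ ball x R, a ≤ β c := by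
  obtain ⟨c, hc, hmax⟩ := (isCompact_closedBall x r).exists_isMaxOn (nonempty_closedBall.2 hr)
    (hcont.mono (closedBall_subset_ball hrR))
  refine ⟨c, closedBall_subset_ball hrR hc, ?_⟩
  have hsup : sSup (β '' ball x R) ≤ max (β c) b := by
    refine csSup_le ((nonempty_ball.2 (hr.trans_lt hrR)).image β) ?_
    rintro _ ⟨z, hz, rfl⟩
    by_cases hzr : dist z x ≤ r
    · exact le_max_of_le_left (hmax hzr)
    · exact le_max_of_le_right (hedge z hz (not_le.1 hzr))
  rcases le_max_iff.1 (ha.trans hsup) with h | h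
  · exact h
  · linarith

lemma mem_unitDisk {w : ℂ} : w ∈ unitDisk ↔ ‖w‖ < 1 := mem_ball_zero_iff

def diskMoebius (a w : ℂ) : ℂ := (w + a) / (1 + conj a * w)

section diskMoebius

variable {a w : ℂ}

lemma one_add_conj_mul_ne_zero (ha : ‖a‖ < 1) (hw : ‖w‖ < 1) : 1 + conj a * w ≠ 0 := by
  intro h
  have h1 : ‖conj a * w‖ = 1 := by rw [eq_neg_of_add_eq_zero_right h]; simp
  rw [norm_mul, Complex.norm_conj] at h1
  nlinarith [norm_nonneg a, norm_nonneg w]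

lemma normSq_one_add_conj_mul_sub_normSq_add (a w : ℂ) :
    normSq (1 + conj a * w) - normSq (w + a) = (1 - normSq a) * (1 - normSq w) := by
  apply Complex.ofReal_injective
  push_cast
  simp only [← Complex.mul_conj, map_add, map_mul, map_one, Complex.conj_conj]
  ring

lemma norm_diskMoebius_lt_one (ha : ‖a‖ < 1) (hw : ‖w‖ < 1) : ‖diskMoebius a w‖ < 1 := by
  have hlt : normSq (w + a) < normSq (1 + conj a * w) := by
    have ha' : normSq a < 1 := by rw [Complex.normSq_eq_norm_sq]; nlinarith [norm_nonneg a]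
    have hw' : normSq w < 1 := by rw [Complex.normSq_eq_norm_sq]; nlinarith [norm_nonneg w]
    nlinarith [normSq_one_add_conj_mul_sub_normSq_add a w]
  rw [Complex.normSq_eq_norm_sq, Complex.normSq_eq_norm_sq] at hlt
  have hlt' := lt_of_pow_lt_pow_left₀ 2 (norm_nonneg _) hlt
  rw [diskMoebius, norm_div, div_lt_one ((norm_nonneg _).trans_lt hlt')]
  exact hlt'

lemma hasDerivAt_diskMoebius (a w : ℂ) (h : 1 + conj a * w ≠ 0) :
    HasDerivAt (diskMoebius a) (((1 - ‖a‖ ^ 2 : ℝ) : ℂ) / (1 + conj a * w) ^ 2) w := by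
  have hnum : HasDerivAt (fun z : ℂ => z + a) 1 w := (hasDerivAt_id w).add_const a
  have hden : HasDerivAt (fun z : ℂ => 1 + conj a * z) (conj a) w := by
    simpa using ((hasDerivAt_id w).const_mul (conj a)).const_add 1
  refine (hnum.div hden h).congr_deriv ?_
  rw [← Complex.normSq_eq_norm_sq, Complex.ofReal_sub, Complex.ofReal_one, ← Complex.mul_conj]
  ring

lemma hasDerivAt_diskMoebius_zero (a : ℂ) :
    HasDerivAt (diskMoebius a) ((1 - ‖a‖ ^ 2 : ℝ) : ℂ) 0 := by
  simpa using hasDerivAt_diskMoebius a 0 (by simp)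

lemma hasDerivAt_diskMoebius_neg (ha : ‖a‖ < 1) :
    HasDerivAt (diskMoebius (-a)) ((1 / (1 - ‖a‖ ^ 2) : ℝ) : ℂ) a := by
  have hden : 1 + conj (-a) * a = ((1 - ‖a‖ ^ 2 : ℝ) : ℂ) := by
    rw [map_neg, neg_mul, mul_comm, Complex.mul_conj, Complex.normSq_eq_norm_sq]
    push_cast; ring
  have hpos : 1 - ‖a‖ ^ 2 ≠ 0 := by nlinarith [norm_nonneg a]
  have h := hasDerivAt_diskMoebius (-a) a (by rw [hden]; exact_mod_cast hpos)
  rw [hden, norm_neg] at h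
  refine h.congr_deriv ?_
  norm_cast
  field_simp

lemma diskMoebius_zero_right (a : ℂ) : diskMoebius a 0 = a := by simp [diskMoebius]

lemma diskMoebius_neg_self (a : ℂ) : diskMoebius a (-a) = 0 := by simp [diskMoebius]

lemma diskMoebius_neg_apply_self (a : ℂ) : diskMoebius (-a) a = 0 := by
  simpa using diskMoebius_neg_self (-a)

@[simp] lemma diskMoebius_zero_left : diskMoebius 0 = id := by
  funext w; simp [diskMoebius]

lemma isSelfMap_diskMoebius (ha : ‖a‖ < 1) : IsSelfMap (diskMoebius a) :=
  ⟨fun w hw => (hasDerivAt_diskMoebius a w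
      (one_add_conj_mul_ne_zero ha (mem_unitDisk.1 hw))).differentiableAt.differentiableWithinAt,
    fun _ hw => mem_unitDisk.2 (norm_diskMoebius_lt_one ha (mem_unitDisk.1 hw))⟩

end diskMoebius

namespace IsSelfMap

variable {f g : ℂ → ℂ}

lemma comp (hf : IsSelfMap f) (hg : IsSelfMap g) : IsSelfMap (f ∘ g) :=
  ⟨hf.1.comp hg.1 hg.2, hf.2.comp hg.2⟩

lemma differentiableAt (hf : IsSelfMap f) {z : ℂ} (hz : z ∈ unitDisk) : DifferentiableAt ℂ f z :=
  hf.1.differentiableAt (isOpen_ball.mem_nhds hz)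

lemma mapsTo_closedBall (hf : IsSelfMap f) (h0 : f 0 = 0) :
    MapsTo f (ball 0 1) (closedBall (f 0) 1) := by
  rw [h0]; exact hf.2.mono_right ball_subset_closedBall

lemma norm_deriv_le_one (hf : IsSelfMap f) (h0 : f 0 = 0) : ‖deriv f 0‖ ≤ 1 :=
  Complex.norm_deriv_le_one_of_mapsTo_ball hf.1 (hf.mapsTo_closedBall h0) one_pos

lemma isRotation_of_norm_deriv_eq_one (hf : IsSelfMap f) (h0 : f 0 = 0)
    (h1 : ‖deriv f 0‖ = 1) : IsRotation f := by
  obtain ⟨lam, hlam, heq⟩ := Complex.affine_of_mapsTo_ball_of_exists_norm_dslope_eq_div' hf.1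
    (hf.mapsTo_closedBall h0) ⟨0, mem_ball_self one_pos, by rw [dslope_same, h1, div_one]⟩
  refine ⟨lam, by rw [hlam, div_one], fun z hz => ?_⟩
  simp only [heq hz, h0, zero_add, sub_zero, smul_eq_mul]
  ring

lemma hasDerivAt_comp_diskMoebius_zero {c : ℂ} (hf : DifferentiableAt ℂ f c) :
    HasDerivAt (f ∘ diskMoebius c) (deriv f c * ((1 - ‖c‖ ^ 2 : ℝ) : ℂ)) 0 := by
  have hfc : HasDerivAt f (deriv f c) (diskMoebius c 0) := by
    rw [diskMoebius_zero_right]; exact hf.hasDerivAt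
  exact hfc.comp 0 (hasDerivAt_diskMoebius_zero c)

/-- The Schwarz–Pick inequality. -/
theorem one_sub_sq_mul_norm_deriv_le (hf : IsSelfMap f) {c : ℂ} (hc : c ∈ unitDisk) :
    (1 - ‖c‖ ^ 2) * ‖deriv f c‖ ≤ 1 - ‖f c‖ ^ 2 := by
  have hc' := mem_unitDisk.1 hc
  have hb : ‖f c‖ < 1 := mem_unitDisk.1 (hf.2 hc)
  -- `χ = m_{-f c} ∘ f ∘ m_c` fixes `0`, so the Schwarz lemma applies to it.
  have hχ : IsSelfMap (diskMoebius (-f c) ∘ f ∘ diskMoebius c) :=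
    (isSelfMap_diskMoebius (by rwa [norm_neg])).comp (hf.comp (isSelfMap_diskMoebius hc'))
  have hχ0 : (diskMoebius (-f c) ∘ f ∘ diskMoebius c) 0 = 0 := by
    simp [diskMoebius_zero_right, diskMoebius_neg_apply_self]
  have hinner := hasDerivAt_comp_diskMoebius_zero (hf.differentiableAt hc)
  have houter : HasDerivAt (diskMoebius (-f c)) ((1 / (1 - ‖f c‖ ^ 2) : ℝ) : ℂ)
      ((f ∘ diskMoebius c) 0) := by
    rw [Function.comp_apply, diskMoebius_zero_right]; exact hasDerivAt_diskMoebius_neg hb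
  have hderiv := (houter.comp 0 hinner).deriv
  have hschwarz := hχ.norm_deriv_le_one hχ0
  have hb2 : 0 < 1 - ‖f c‖ ^ 2 := by nlinarith [norm_nonneg (f c)]
  have hc2 : 0 ≤ 1 - ‖c‖ ^ 2 := by nlinarith [norm_nonneg c]
  rw [hderiv, norm_mul, norm_mul, Complex.norm_real, Complex.norm_real,
    Real.norm_of_nonneg (by positivity), Real.norm_of_nonneg hc2, one_div_mul_eq_div,
    div_le_one hb2] at hschwarz
  linarith

/-- The equality case of the Schwarz–Pick inequality, for maps fixing `0`. -/
theorem isRotation_of_one_le (hf : IsSelfMap f) (h0 : f 0 = 0) {c : ℂ} (hc : c ∈ unitDisk)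
    (h1 : 1 ≤ (1 - ‖c‖ ^ 2) * ‖deriv f c‖) : IsRotation f := by
  have hc' := mem_unitDisk.1 hc
  have hfc : f c = 0 := by
    have := hf.one_sub_sq_mul_norm_deriv_le hc
    exact norm_eq_zero.1 (pow_eq_zero_iff two_ne_zero |>.1 (by nlinarith [sq_nonneg ‖f c‖]))
  have hχ : IsSelfMap (f ∘ diskMoebius c) := hf.comp (isSelfMap_diskMoebius hc')
  have hχ0 : (f ∘ diskMoebius c) 0 = 0 := by rw [Function.comp_apply, diskMoebius_zero_right, hfc]
  have hnorm : ‖deriv (f ∘ diskMoebius c) 0‖ = 1 := by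
    refine le_antisymm (hχ.norm_deriv_le_one hχ0) ?_
    rw [(hasDerivAt_comp_diskMoebius_zero (hf.differentiableAt hc)).deriv, norm_mul,
      Complex.norm_real, Real.norm_of_nonneg (by nlinarith [norm_nonneg c])]
    linarith
  obtain ⟨lam, hlam, hrot⟩ := hχ.isRotation_of_norm_deriv_eq_one hχ0 hnorm
  -- `χ = f ∘ m_c` is the rotation by `lam` and vanishes at `-c`, so `c = 0` and `χ = f`.
  have hc0 : c = 0 := by
    have h := hrot (-c) (mem_unitDisk.2 (by rwa [norm_neg]))
    rw [Function.comp_apply, diskMoebius_neg_self, h0, eq_comm, mul_eq_zero, neg_eq_zero] at h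
    exact h.resolve_left (ne_zero_of_norm_ne_zero (by rw [hlam]; exact one_ne_zero))
  subst hc0
  exact ⟨lam, hlam, by simpa using hrot⟩

end IsSelfMap

def blochTerm (f : ℂ → ℂ) (z : ℂ) : ℝ := (1 - ‖z‖ ^ 2) * ‖deriv f z‖

lemma hbSet_one_const_zero (h : ℂ → ℂ) : hbSet 1 h (fun _ => 0) = blochTerm h '' unitDisk := by
  simp only [hbSet, Real.rpow_one, deriv_const', norm_zero, add_zero]
  rfl

lemma isGreatest_blochTerm_id : IsGreatest (blochTerm id '' unitDisk) 1 := by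
  refine ⟨⟨0, mem_ball_self one_pos, by simp [blochTerm]⟩, ?_⟩
  rintro _ ⟨z, -, rfl⟩
  simp only [blochTerm, deriv_id, norm_one, mul_one]
  nlinarith [norm_nonneg z]

lemma isHB_id : IsHB 1 id (fun _ => 0) :=
  ⟨differentiableOn_id, differentiableOn_const 0,
    by rw [hbSet_one_const_zero]; exact isGreatest_blochTerm_id.bddAbove⟩

lemma hbNorm_id : hbNorm 1 id (fun _ => 0) = 1 := by
  rw [hbNorm, hbSemi, hbSet_one_const_zero, isGreatest_blochTerm_id.csSup_eq]
  simp

lemma IsIsometryOn.norm_apply_zero_add_sSup_blochTerm {φ : ℂ → ℂ} (hiso : IsIsometryOn 1 φ) :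
    ‖φ 0‖ + sSup (blochTerm φ '' unitDisk) = 1 := by
  have h : hbNorm 1 φ (fun _ => 0) = hbNorm 1 id (fun _ => 0) := hiso id (fun _ => 0) isHB_id
  rwa [hbNorm_id, hbNorm, hbSemi, hbSet_one_const_zero, map_zero, add_zero] at h

lemma continuousOn_blochTerm {f : ℂ → ℂ} (hf : DifferentiableOn ℂ f unitDisk) :
    ContinuousOn (blochTerm f) unitDisk :=
  (continuous_const.sub (continuous_norm.pow 2)).continuousOn.mul
    (hf.analyticOnNhd isOpen_ball).deriv.continuousOn.norm

lemma exists_one_le_blochTerm {f : ℂ → ℂ} (hf : DifferentiableOn ℂ f unitDisk)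
    (hbdd : ∃ M : ℝ, ∀ z ∈ unitDisk, ‖deriv f z‖ ≤ M)
    (hsup : 1 ≤ sSup (blochTerm f '' unitDisk)) : ∃ c ∈ unitDisk, 1 ≤ blochTerm f c := by
  obtain ⟨M, hM⟩ := hbdd
  set K := max M 1
  have hK : 1 ≤ K := le_max_right M 1
  have hε : 1 / (4 * K) ≤ 1 / 4 := by gcongr; linarith
  refine exists_mem_ball_le_of_le_sSup (continuousOn_blochTerm hf) (r := 1 - 1 / (4 * K))
    (b := 1 / 2) (by linarith) (by simp only [sub_lt_self_iff]; positivity) (by norm_num)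
    (fun z hz hzr => ?_) hsup
  -- Near the circle, `1 - ‖z‖ ^ 2 ≤ 2 (1 - ‖z‖)` is small while `‖f'‖ ≤ K`.
  rw [dist_zero_right] at hzr
  have hz1 := mem_unitDisk.1 hz
  calc blochTerm f z ≤ (2 * (1 / (4 * K))) * K := by
        unfold blochTerm
        gcongr
        · nlinarith [norm_nonneg z]
        · exact (hM z hz).trans (le_max_left M 1)
    _ = 1 / 2 := by field_simp; ring

/-- if `φ` is an analytic self-map of the disk with `φ(0) = 0`, `C_φ` is an
isometry on `HB(1)`, and `φ'` is bounded on the disk, then `φ` is a rotation. -/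
theorem stmt4 (φ : ℂ → ℂ) (hφ : IsSelfMap φ) (h0 : φ 0 = 0)
    (hiso : IsIsometryOn 1 φ)
    (hbdd : ∃ M : ℝ, ∀ z ∈ unitDisk, ‖deriv φ z‖ ≤ M) :
    IsRotation φ := by
  have hsup : sSup (blochTerm φ '' unitDisk) = 1 := by
    simpa [h0] using hiso.norm_apply_zero_add_sSup_blochTerm
  obtain ⟨c, hc, hc1⟩ := exists_one_le_blochTerm hφ.1 hbdd hsup.ge
  exact hφ.isRotation_of_one_le h0 hc hc1
end
end

section
/- If C_φ is an isometry on the harmonic α-Bloch space HB(α) for some α > 0, then φ(0) = 0 and sup_{z∈D} (1-|z|²)^α |φ'(z)| = 1. -/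
open Complex Metric Set Filter
noncomputable section

/-! Both sides of the isometry identity can be computed exactly for the affine harmonic
functions `f = h + conj g` (`h, g` with constant derivatives): the Bloch part of `f ∘ φ` is
`(‖h'‖ + ‖g'‖)` times the α-Bloch seminorm `S` of `φ`. Testing with `L = z + z̄` gives `S ≤ 1`;
testing with `f_a = 1 - (āz + a z̄)`, `a = φ(0)`, gives `|1 - 2|a|²| + 2|a| S = 1 + 2|a|`,
which for `|a| < 1` and `S ≤ 1` forces `a = 0`, and then `L` gives `S = 1`. -/

open ComplexConjugate

def blochSemi (α : ℝ) (φ : ℂ → ℂ) : ℝ :=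
  sSup ((fun z => (1 - ‖z‖ ^ 2) ^ α * ‖deriv φ z‖) '' unitDisk)

lemma zero_mem_unitDisk : (0 : ℂ) ∈ unitDisk := mem_ball_self one_pos

lemma norm_lt_one_of_mem_unitDisk {z : ℂ} (hz : z ∈ unitDisk) : ‖z‖ < 1 :=
  mem_ball_zero_iff.1 hz

lemma isGreatest_weight_image {α : ℝ} (hα : 0 ≤ α) :
    IsGreatest ((fun z : ℂ => (1 - ‖z‖ ^ 2) ^ α) '' unitDisk) 1 := by
  refine ⟨⟨0, zero_mem_unitDisk, by simp⟩, ?_⟩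
  rintro _ ⟨z, hz, rfl⟩
  have hz1 := norm_lt_one_of_mem_unitDisk hz
  exact Real.rpow_le_one (by nlinarith [norm_nonneg z]) (by nlinarith [norm_nonneg z]) hα

lemma blochSemi_id {α : ℝ} (hα : 0 ≤ α) : blochSemi α id = 1 := by
  simpa [blochSemi] using (isGreatest_weight_image hα).csSup_eq

section Affine

variable {α : ℝ} {φ h g : ℂ → ℂ} {β γ : ℂ}

lemma hbSet_comp_eq (hφ : DifferentiableOn ℂ φ unitDisk) (hh : ∀ w, HasDerivAt h β w)
    (hg : ∀ w, HasDerivAt g γ w) :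
    hbSet α (h ∘ φ) (g ∘ φ) =
      (fun z => (‖β‖ + ‖γ‖) * ((1 - ‖z‖ ^ 2) ^ α * ‖deriv φ z‖)) '' unitDisk := by
  refine image_congr fun z hz => ?_
  have hφz : HasDerivAt φ (deriv φ z) z :=
    (hφ.differentiableAt (isOpen_ball.mem_nhds hz)).hasDerivAt
  rw [((hh (φ z)).comp z hφz).deriv, ((hg (φ z)).comp z hφz).deriv, norm_mul, norm_mul]
  ring

lemma hbSemi_comp_eq (hφ : DifferentiableOn ℂ φ unitDisk) (hh : ∀ w, HasDerivAt h β w)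
    (hg : ∀ w, HasDerivAt g γ w) :
    hbSemi α (h ∘ φ) (g ∘ φ) = (‖β‖ + ‖γ‖) * blochSemi α φ := by
  rw [hbSemi, hbSet_comp_eq hφ hh hg, blochSemi, ← smul_eq_mul,
    ← Real.sSup_smul_of_nonneg (by positivity), ← image_smul, ← image_comp]
  rfl

lemma hbSemi_eq_of_hasDerivAt (hα : 0 ≤ α) (hh : ∀ w, HasDerivAt h β w)
    (hg : ∀ w, HasDerivAt g γ w) : hbSemi α h g = ‖β‖ + ‖γ‖ := by
  simpa [blochSemi_id hα] using hbSemi_comp_eq (α := α) differentiableOn_id hh hg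

lemma isHB_of_hasDerivAt (hα : 0 ≤ α) (hh : ∀ w, HasDerivAt h β w)
    (hg : ∀ w, HasDerivAt g γ w) : IsHB α h g := by
  refine ⟨fun w _ => (hh w).differentiableAt.differentiableWithinAt,
    fun w _ => (hg w).differentiableAt.differentiableWithinAt, ?_⟩
  have hset := hbSet_comp_eq (α := α) differentiableOn_id hh hg
  simp only [Function.comp_id, deriv_id, norm_one, mul_one] at hset
  rw [hset, ← image_image (fun r => (‖β‖ + ‖γ‖) * r)]
  exact (monotone_mul_left_of_nonneg (by positivity)).map_bddAbove
    (isGreatest_weight_image hα).bddAbove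

lemma IsIsometryOn.norm_add_mul_blochSemi (hiso : IsIsometryOn α φ) (hα : 0 ≤ α)
    (hφ : DifferentiableOn ℂ φ unitDisk) (hh : ∀ w, HasDerivAt h β w)
    (hg : ∀ w, HasDerivAt g γ w) :
    ‖h (φ 0) + conj (g (φ 0))‖ + (‖β‖ + ‖γ‖) * blochSemi α φ =
      ‖h 0 + conj (g 0)‖ + (‖β‖ + ‖γ‖) := by
  have hnorm := hiso h g (isHB_of_hasDerivAt hα hh hg)
  rwa [hbNorm, hbNorm, hbSemi_comp_eq hφ hh hg, hbSemi_eq_of_hasDerivAt hα hh hg] at hnorm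

end Affine

lemma eq_zero_of_abs_one_sub_two_sq {t S : ℝ} (ht0 : 0 ≤ t) (ht1 : t < 1) (hS : S ≤ 1)
    (h : |1 - 2 * t ^ 2| + 2 * t * S = 1 + 2 * t) : t = 0 := by
  rcases abs_cases (1 - 2 * t ^ 2) with ⟨habs, _⟩ | ⟨habs, _⟩ <;> nlinarith

/-- if `C_φ` is an isometry on `HB(α)` for some `α > 0`, then `φ(0) = 0` and
`sup_{z∈D}(1-|z|²)^α |φ'(z)| = 1`. -/
theorem stmt8 (α : ℝ) (hα : 0 < α) (φ : ℂ → ℂ) (hφ : IsSelfMap φ)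
    (hiso : IsIsometryOn α φ) :
    φ 0 = 0 ∧
      sSup ((fun z => (1 - ‖z‖ ^ 2) ^ α * ‖deriv φ z‖) '' unitDisk)
        = 1 := by
  obtain ⟨hdiff, hmap⟩ := hφ
  obtain ⟨a, ha_def⟩ : ∃ a, φ 0 = a := ⟨_, rfl⟩
  have hL : ‖a + conj a‖ + 2 * blochSemi α φ = 2 := by
    simpa [ha_def, one_add_one_eq_two] using
      hiso.norm_add_mul_blochSemi hα.le hdiff (fun w => hasDerivAt_id w) (fun w => hasDerivAt_id w)
  have hfa_h (w : ℂ) : HasDerivAt (fun z => 1 - conj a * z) (-conj a) w := by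
    simpa using ((hasDerivAt_id w).const_mul (conj a)).const_sub 1
  have hfa_g (w : ℂ) : HasDerivAt (fun z => -conj a * z) (-conj a) w := by
    simpa using (hasDerivAt_id w).const_mul (-conj a)
  have hfa_a : 1 - conj a * a + conj (-conj a * a) = ((1 - 2 * ‖a‖ ^ 2 : ℝ) : ℂ) := by
    rw [map_mul, map_neg, conj_conj, neg_mul, mul_comm, mul_conj, normSq_eq_norm_sq]
    push_cast
    ring
  have hfa := hiso.norm_add_mul_blochSemi hα.le hdiff hfa_h hfa_g
  simp only [ha_def, hfa_a, mul_zero, sub_zero, map_zero, add_zero, norm_one, norm_neg,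
    norm_conj, norm_real, Real.norm_eq_abs] at hfa
  have hS : blochSemi α φ ≤ 1 := by linarith [norm_nonneg (a + conj a)]
  have ha : a = 0 := norm_eq_zero.1 <| eq_zero_of_abs_one_sub_two_sq (norm_nonneg a)
    (norm_lt_one_of_mem_unitDisk (ha_def ▸ hmap zero_mem_unitDisk)) hS (by linarith)
  refine ⟨ha_def.trans ha, ?_⟩
  rw [ha, map_zero, add_zero, norm_zero, zero_add] at hL
  change blochSemi α φ = 1
  linarith
end
end
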